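/- arXiv:math/0605567 — 10 statements merged into one kernel-verified Lean document; each statement's English description precedes it below -/
import Mathlib

section
/- Let L be a p×n integer matrix of rank p with n = r + s, and suppose the last s columns of L are linearly independent over ℚ. Then there exist a permutation matrix Δ ∈ GL_n(ℤ) permuting only the first r coordinates, a p×p integer matrix Γ with nonzero determinant, and a positive integer d, such that Γ·L·Δ = [L_1 | d·I_p], i.e., the submatrix of Γ·L·Δ formed by the last p columns equals d times the p×p identity matrix. Moreover, the map λ ↦ Δ^{−1}λ is a bijection from Σ_L = {λ ∈ ℕ^r × ℤ^s : Lλ = 0} onto Σ_{ΓLΔ} = {λ ∈ ℕ^r × ℤ^s : (ΓLΔ)λ = 0}. -/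
/-!
Over `ℚ` the columns of `L` span `ℚ^p`, so the `s` independent last columns extend to a basis
of `ℚ^p` by `p - s` columns taken among the first `r`. A permutation `σ` of the first `r`
coordinates moves them to the positions `n - p, …, r - 1`, so that the last `p` columns of
`L ∘ σ` form an invertible block `M`; then `Γ = det M • adj M` gives `Γ M = (det M)² • 1`.
As `σ` maps the sign-constrained coordinates to themselves and `Γ` is injective,
`λ ↦ λ ∘ σ` matches the two sets of lattice points.
-/

theorem Equiv.Perm.exists_mapsTo_of_natCard_eq {α : Type*} [Finite α] {s t u : Set α}
    (hus : u ⊆ s) (hut : u ⊆ t) (h : Nat.card s = Nat.card t) :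
    ∃ σ : Equiv.Perm α, (∀ x ∈ u, σ x = x) ∧ Set.MapsTo σ s t := by
  obtain ⟨e⟩ : Nonempty (↥(s \ u) ≃ ↥(t \ u)) := by
    rw [← Finite.card_eq]
    simp only [Nat.card_coe_set_eq] at h ⊢
    have hs := Set.ncard_sdiff_add_ncard_of_subset hus
    have ht := Set.ncard_sdiff_add_ncard_of_subset hut
    omega
  obtain ⟨σ, hσ⟩ := Equiv.Perm.exists_extending_pair
    (Sum.elim (fun x : ↥(s \ u) => (x : α)) (fun x : u => (x : α)))
    (Sum.elim (fun x => (e x : α)) (fun x : u => (x : α)))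
    (Subtype.val_injective.sumElim Subtype.val_injective fun x y hxy => x.2.2 (hxy ▸ y.2))
    ((Subtype.val_injective.comp e.injective).sumElim Subtype.val_injective
      fun x y (hxy : (e x : α) = y) => (e x).2.2 (hxy ▸ y.2))
  refine ⟨σ, fun x hx => hσ (.inr ⟨x, hx⟩), fun x hx => ?_⟩
  by_cases hxu : x ∈ u
  · have hσx : σ x = x := hσ (.inr ⟨x, hxu⟩)
    rw [hσx]
    exact hut hxu
  · have hσx : σ x = e ⟨x, hx, hxu⟩ := hσ (.inl ⟨x, hx, hxu⟩)
    rw [hσx]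
    exact (e _).2.1

theorem Equiv.Perm.apply_iff_of_forall_not_apply_eq {α : Type*} {p : α → Prop}
    (σ : Equiv.Perm α) (hσ : ∀ x, ¬ p x → σ x = x) (x : α) : p (σ x) ↔ p x := by
  refine ⟨fun h => by_contra fun hx => hx (hσ x hx ▸ h), fun h => by_contra fun hx => ?_⟩
  rw [σ.injective (hσ _ hx)] at hx
  exact hx h

theorem exists_linearIndepOn_superset_natCard_eq_finrank {K V ι : Type*} [DivisionRing K]
    [AddCommGroup V] [Module K V] [FiniteDimensional K V] [Finite ι] {v : ι → V}
    (hv : Submodule.span K (Set.range v) = ⊤) {s : Set ι} (hs : LinearIndepOn K v s) :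
    ∃ b, s ⊆ b ∧ LinearIndepOn K v b ∧ Nat.card b = Module.finrank K V := by
  obtain ⟨b, -, hsb, hspan, hb⟩ := exists_linearIndepOn_extension hs (Set.subset_univ s)
  have htop : Submodule.span K (Set.range fun x : b => v x) = ⊤ := by
    rw [← Set.image_eq_range, eq_top_iff, ← hv, Submodule.span_le, ← Set.image_univ]
    exact hspan
  have := Fintype.ofFinite b
  refine ⟨b, hsb, hb, ?_⟩
  rw [Nat.card_eq_fintype_card, ← finrank_span_eq_card hb, htop, finrank_top]

namespace Matrix

theorem span_col_eq_top_of_linearIndependent_row {K m n : Type*} [Field K] [Fintype m]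
    [Fintype n] {A : Matrix m n K} (h : LinearIndependent K A.row) :
    Submodule.span K (Set.range A.col) = ⊤ := by
  apply Submodule.eq_top_of_finrank_eq
  rw [← rank_eq_finrank_span_cols, h.rank_matrix, Module.finrank_fintype_fun_eq_card]

theorem exists_perm_linearIndependent_col_comp {K m ι : Type*} [Field K] [Fintype m]
    [Fintype ι] {A : Matrix m ι K} (hA : LinearIndependent K A.row) {s : Set ι}
    (hs : LinearIndepOn K A.col s) {f : m → ι} (hf : Function.Injective f)
    (hsf : s ⊆ Set.range f) :
    ∃ σ : Equiv.Perm ι, (∀ i ∈ s, σ i = i) ∧ LinearIndependent K (A.col ∘ σ ∘ f) := by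
  obtain ⟨b, hsb, hb, hbcard⟩ := exists_linearIndepOn_superset_natCard_eq_finrank
    (span_col_eq_top_of_linearIndependent_row hA) hs
  obtain ⟨σ, hσs, hσb⟩ := Equiv.Perm.exists_mapsTo_of_natCard_eq hsf hsb (by
    rw [hbcard, Nat.card_range_of_injective hf, Module.finrank_fintype_fun_eq_card,
      Nat.card_eq_fintype_card])
  refine ⟨σ, hσs, (linearIndepOn_range_iff (σ.injective.comp hf) _).1 (hb.mono ?_)⟩
  exact Set.range_subset_iff.2 fun j => hσb ⟨j, rfl⟩

theorem det_ne_zero_of_linearIndependent_col_map {R K m : Type*} [CommRing R] [Field K]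
    [Fintype m] [DecidableEq m] {f : R →+* K} {M : Matrix m m R}
    (h : LinearIndependent K (M.map f).col) : M.det ≠ 0 := by
  have hdet := (isUnit_iff_isUnit_det _).1 (linearIndependent_cols_iff_isUnit.1 h)
  rw [← RingHom.mapMatrix_apply, ← RingHom.map_det] at hdet
  exact fun h0 => hdet.ne_zero (by rw [h0, map_zero])

theorem exists_mul_eq_smul_one_of_det_ne_zero {R m : Type*} [CommRing R] [LinearOrder R]
    [IsStrictOrderedRing R] [Fintype m] [DecidableEq m] {M : Matrix m m R} (hM : M.det ≠ 0) :
    ∃ Γ : Matrix m m R, Γ.det ≠ 0 ∧ ∃ d : R, 0 < d ∧ Γ * M = d • 1 := by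
  refine ⟨M.det • M.adjugate, ?_, M.det ^ 2, sq_pos_of_ne_zero hM, ?_⟩
  · rw [det_smul, det_adjugate]
    exact mul_ne_zero (pow_ne_zero _ hM) (pow_ne_zero _ hM)
  · rw [smul_mul, adjugate_mul, smul_smul, sq]

theorem bijOn_comp_perm_of_det_ne_zero {R ι m : Type*} [CommRing R] [IsDomain R]
    [PartialOrder R] [Fintype ι] [Fintype m] [DecidableEq m] {P : ι → Prop}
    (L : Matrix m ι R) {Γ : Matrix m m R} (hΓ : Γ.det ≠ 0) {σ : Equiv.Perm ι}
    (hσ : ∀ i, ¬ P i → σ i = i) :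
    Set.BijOn (fun lam : ι → R => lam ∘ σ)
      {lam | (∀ i, P i → 0 ≤ lam i) ∧ L *ᵥ lam = 0}
      {lam | (∀ i, P i → 0 ≤ lam i) ∧ (Γ * L.submatrix id σ) *ᵥ lam = 0} := by
  refine (σ.symm.arrowCongr (Equiv.refl R)).bijOn fun lam => and_congr ?_ ?_
  · exact σ.forall_congr fun i => by
      rw [σ.apply_iff_of_forall_not_apply_eq hσ]
      rfl
  · change (Γ * L.submatrix id σ) *ᵥ (lam ∘ σ) = 0 ↔ _
    rw [← mulVec_mulVec, submatrix_mulVec_equiv, Function.comp_assoc, σ.self_comp_symm]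
    exact ⟨eq_zero_of_mulVec_eq_zero hΓ, fun h => h ▸ mulVec_zero Γ⟩

end Matrix

/-- Let `L` be a `p × n` integer matrix of rank `p`, `n = r + s`, whose last
`s` columns are linearly independent over `ℚ`. Then there exist a permutation `σ` of the
columns fixing the last `s` of them (a permutation matrix `Δ` permuting only the first `r`
coordinates), a `p × p` integer matrix `Γ` with nonzero determinant, and a positive
integer `d`, such that the last `p` columns of `Γ·L·Δ` equal `d·I_p`.  Moreover
`λ ↦ Δ⁻¹λ` (i.e. `λ ↦ λ ∘ σ`) is a bijection from `Σ_L = {λ ∈ ℕ^r × ℤ^s | Lλ = 0}` onto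
`Σ_{ΓLΔ}`. -/
theorem stmt4 {p r s : ℕ} (n : ℕ) (hn : n = r + s)
    (L : Matrix (Fin p) (Fin n) ℤ)
    (hrank : LinearIndependent ℚ (fun j : Fin p => fun i : Fin n => (L j i : ℚ)))
    (hcols : LinearIndependent ℚ
      (fun i : Fin s => fun j : Fin p =>
        (L j ⟨r + (i : ℕ), by have := i.isLt; omega⟩ : ℚ))) :
    ∃ (σ : Equiv.Perm (Fin n)) (Γ : Matrix (Fin p) (Fin p) ℤ) (d : ℤ),
      (∀ i : Fin n, r ≤ (i : ℕ) → σ i = i) ∧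
      Γ.det ≠ 0 ∧ 0 < d ∧
      (∀ (j : Fin p) (i : Fin n), n - p ≤ (i : ℕ) →
        (Γ * L.submatrix id σ) j i = if (i : ℕ) = (n - p) + (j : ℕ) then d else 0) ∧
      Set.BijOn (fun lam : Fin n → ℤ => lam ∘ σ)
        {lam : Fin n → ℤ | (∀ i : Fin n, (i : ℕ) < r → 0 ≤ lam i) ∧ L.mulVec lam = 0}
        {lam : Fin n → ℤ | (∀ i : Fin n, (i : ℕ) < r → 0 ≤ lam i) ∧
          (Γ * L.submatrix id σ).mulVec lam = 0} := by
  subst hn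
  have hps : p ≤ r + s := by simpa using hrank.fintype_card_le_finrank
  have hsp : s ≤ p := by simpa using hcols.fintype_card_le_finrank
  let lastCol : Fin p → Fin (r + s) := fun j => ⟨r + s - p + j, by omega⟩
  have hlastCol : Function.Injective lastCol := fun j k h => Fin.ext (by
    simp only [lastCol, Fin.mk.injEq] at h
    omega)
  obtain ⟨σ, hσfix, hσcols⟩ := Matrix.exists_perm_linearIndependent_col_comp
    (A := L.map (Int.cast : ℤ → ℚ)) hrank
    ((linearIndepOn_range_iff (Fin.natAdd_injective s r) _).2 hcols) hlastCol (by
      rintro _ ⟨i, rfl⟩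
      exact ⟨⟨p - s + i, by omega⟩, Fin.ext (by simp [lastCol]; omega)⟩)
  have hσ : ∀ i : Fin (r + s), r ≤ (i : ℕ) → σ i = i := fun i hi =>
    hσfix i ⟨⟨i - r, by omega⟩, Fin.ext (by simp; omega)⟩
  obtain ⟨Γ, hΓ, d, hd, hΓM⟩ := Matrix.exists_mul_eq_smul_one_of_det_ne_zero
    (Matrix.det_ne_zero_of_linearIndependent_col_map (f := Int.castRingHom ℚ)
      (M := L.submatrix id (σ ∘ lastCol)) hσcols)
  refine ⟨σ, Γ, d, hσ, hΓ, hd, fun j i hi => ?_,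
    Matrix.bijOn_comp_perm_of_det_ne_zero L hΓ fun i hi => hσ i (not_lt.1 hi)⟩
  obtain ⟨k, rfl⟩ : ∃ k, lastCol k = i :=
    ⟨⟨i - (r + s - p), by omega⟩, Fin.ext (by simp [lastCol]; omega)⟩
  change (Γ * L.submatrix id (σ ∘ lastCol)) j k = _
  rw [hΓM, Matrix.smul_apply, Matrix.one_apply]
  simp only [lastCol, Nat.add_left_cancel_iff, Fin.val_eq_val, eq_comm (a := k)]
  split_ifs <;> simp
end

section
/- The following statements are equivalent: (1) 𝔎 ∩ (ℕ^r × ℤ^s) = {0} (equivalently, the only homogeneous Laurent polynomials of degree 0 are the constants, S_0 = k); (2) 𝔎 ∩ (ℕ^r × ℤ^s) is a finite set (equivalently, S_0 is a finite-dimensional k-vector space); (3) the real linear span of 𝔎 in ℝ^n intersects the cone ℝ_{≥0}^r × ℝ^s = {x ∈ ℝ^n : x_i ≥ 0 for 1 ≤ i ≤ r} only in 0 (equivalently, any fan compatible with the multigrading is not contained in a half-space). -/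
open Matrix

/-- The kernel `𝔎` of the degree map `deg : ℤ^n → A = ℤ^p ⊕ ℤ/d_1 ⊕ … ⊕ ℤ/d_t`. -/
def Kker {p t n : ℕ} (L : Matrix (Fin p ⊕ Fin t) (Fin n) ℤ) (d : Fin t → ℤ) :
    Set (Fin n → ℤ) :=
  {lam | (∀ j : Fin p, L.mulVec lam (Sum.inl j) = 0) ∧
    ∀ j : Fin t, d j ∣ L.mulVec lam (Sum.inr j)}

/-- `ℕ^r × ℤ^s ⊆ ℤ^n`: the vectors whose first `r` coordinates are nonnegative. -/
def NNcone (r n : ℕ) : Set (Fin n → ℤ) :=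
  {lam | ∀ i : Fin n, (i : ℕ) < r → 0 ≤ lam i}

/-! (1) ⇔ (2): `𝔎 ∩ (ℕ^r × ℤ^s)` is an additive monoid inside the torsion-free group `ℤ^n`, so any
nonzero element `v` yields the infinitely many elements `k • v`.

(2) ⇔ (3): a nonzero lattice point of the cone is a nonzero real one. Conversely, let `x ≠ 0` lie in
the real span of `𝔎` and in the cone. Eliminating the vanishing coordinates of `x` one at a time by
integer Gaussian elimination shows that `x` lies in the real span of the sublattice of `𝔎` vanishing
wherever `x` does. Rounding the coefficients of `x` to a common denominator `N` approximates `x` by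
`v / N` with `v` in that sublattice; close enough to `x`, `v` has the signs of `x`, so it is a nonzero
lattice point of the cone. -/

theorem AddSubmonoid.eq_bot_of_finite {M : Type*} [AddCommGroup M] [IsAddTorsionFree M]
    (S : AddSubmonoid M) (hS : (S : Set M).Finite) : S = ⊥ := by
  refine (AddSubmonoid.eq_bot_iff_forall S).2 fun x hx => ?_
  by_contra hx0
  exact hS.not_infinite <| Set.infinite_of_injective_forall_mem
    (injective_nsmul_iff_not_isOfFinAddOrder.2 (not_isOfFinAddOrder_of_isAddTorsionFree hx0))
    fun k => S.nsmul_mem hx k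

theorem mem_closure_of_mem_span_addSubgroup {E : Type*} [NormedAddCommGroup E] [NormedSpace ℝ E]
    {A : AddSubgroup E} {x : E} (hx : x ∈ Submodule.span ℝ (A : Set E)) :
    x ∈ closure {y : E | ∃ N : ℕ, N ≠ 0 ∧ N • y ∈ A} := by
  obtain ⟨m, c, v, rfl⟩ := Submodule.mem_span_set'.1 hx
  rw [Metric.mem_closure_iff]
  intro ε hε
  set B := ∑ i, ‖(v i : E)‖
  obtain ⟨N, hN⟩ := exists_nat_gt (B / ε)
  have hN₀ : (0 : ℝ) < N :=
    (div_nonneg (Finset.sum_nonneg fun _ _ => norm_nonneg _) hε.le).trans_lt hN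
  refine ⟨(N : ℝ)⁻¹ • ∑ i, round (N * c i) • (v i : E), ⟨N, by exact_mod_cast hN₀.ne', ?_⟩, ?_⟩
  · rw [← Nat.cast_smul_eq_nsmul ℝ, smul_inv_smul₀ hN₀.ne']
    exact A.sum_mem fun i _ => A.zsmul_mem (v i).2 _
  have hround : ∀ i, |c i - (N : ℝ)⁻¹ * round (N * c i)| ≤ (N : ℝ)⁻¹ := fun i => by
    calc |c i - (N : ℝ)⁻¹ * round (N * c i)| = (N : ℝ)⁻¹ * |N * c i - round (N * c i)| := by
          rw [← abs_of_pos (inv_pos.2 hN₀), ← abs_mul, abs_of_pos (inv_pos.2 hN₀), mul_sub,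
            inv_mul_cancel_left₀ hN₀.ne']
      _ ≤ (N : ℝ)⁻¹ * 1 := by gcongr; exact (abs_sub_round _).trans (by norm_num)
      _ = (N : ℝ)⁻¹ := mul_one _
  calc dist (∑ i, c i • (v i : E)) ((N : ℝ)⁻¹ • ∑ i, round (N * c i) • (v i : E))
      = ‖∑ i, (c i - (N : ℝ)⁻¹ * round (N * c i)) • (v i : E)‖ := by
        simp only [dist_eq_norm, Finset.smul_sum, ← Finset.sum_sub_distrib, sub_smul, mul_smul,
          Int.cast_smul_eq_zsmul]
    _ ≤ ∑ i, (N : ℝ)⁻¹ * ‖(v i : E)‖ := norm_sum_le_of_le _ fun i _ => by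
        rw [norm_smul, Real.norm_eq_abs]; gcongr; exact hround i
    _ = B / N := by rw [← Finset.mul_sum, inv_mul_eq_div]
    _ < ε := by rwa [div_lt_iff₀ hN₀, mul_comm, ← div_lt_iff₀ hε]

section IntegerLattice

variable {ι : Type*}

def realSpan (G : AddSubgroup (ι → ℤ)) : Submodule ℝ (ι → ℝ) :=
  Submodule.span ℝ (G.map ((Int.castAddHom ℝ).compLeft ι))

theorem realSpan_mono {G H : AddSubgroup (ι → ℤ)} (h : G ≤ H) : realSpan G ≤ realSpan H :=
  Submodule.span_mono (AddSubgroup.map_mono h)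

theorem mem_realSpan_inf_ker_eval {G : AddSubgroup (ι → ℤ)} {x : ι → ℝ} (i : ι)
    (hx : x ∈ realSpan G) (hxi : x i = 0) :
    x ∈ realSpan (G ⊓ (Pi.evalAddMonoidHom (fun _ => ℤ) i).ker) := by
  by_cases hG : ∀ v ∈ G, v i = 0
  · exact realSpan_mono (le_inf le_rfl fun v hv => hG v hv) hx
  push Not at hG
  obtain ⟨v₀, hv₀, ha⟩ := hG
  set a := v₀ i
  -- `f y = a • y - y i • v₀` kills the `i`-th coordinate and maps `G` into itself.
  let f : (ι → ℝ) →ₗ[ℝ] (ι → ℝ) :=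
    (a : ℝ) • LinearMap.id - (LinearMap.proj i).smulRight (fun j => (v₀ j : ℝ))
  have hf : realSpan G ≤ (realSpan (G ⊓ (Pi.evalAddMonoidHom (fun _ => ℤ) i).ker)).comap f := by
    refine Submodule.span_le.2 ?_
    rintro - ⟨v, hv, rfl⟩
    refine Submodule.subset_span ⟨a • v - v i • v₀,
      ⟨G.sub_mem (G.zsmul_mem hv a) (G.zsmul_mem hv₀ _), by simp [a, mul_comm]⟩, ?_⟩
    ext j
    simp [f]
  have hfx : f x = (a : ℝ) • x := by simp [f, hxi]
  have := hf hx
  rw [Submodule.mem_comap, hfx] at this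
  exact (Submodule.smul_mem_iff _ (by exact_mod_cast ha)).1 this

theorem mem_realSpan_inf_iInf_ker_eval {G : AddSubgroup (ι → ℤ)} {x : ι → ℝ} (s : Finset ι)
    (hx : x ∈ realSpan G) (hxs : ∀ i ∈ s, x i = 0) :
    x ∈ realSpan (G ⊓ ⨅ i ∈ s, (Pi.evalAddMonoidHom (fun _ => ℤ) i).ker) := by
  classical
  induction s using Finset.induction_on with
  | empty => simpa using hx
  | insert j s hj ih =>
    refine realSpan_mono ?_ (mem_realSpan_inf_ker_eval j
      (ih fun i hi => hxs i (Finset.mem_insert_of_mem hi)) (hxs j (Finset.mem_insert_self _ _)))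
    intro v hv
    simp only [AddSubgroup.mem_inf, AddSubgroup.mem_iInf, AddMonoidHom.mem_ker,
      Pi.evalAddMonoidHom_apply, Finset.mem_insert] at hv ⊢
    exact ⟨hv.1.1, fun i hi => hi.elim (fun h => h ▸ hv.2) (hv.1.2 i)⟩

theorem forall_mem_realSpan_nonneg_eq_zero_iff [Fintype ι] (G : AddSubgroup (ι → ℤ))
    (P : ι → Prop) :
    (∀ x ∈ realSpan G, (∀ i, P i → 0 ≤ x i) → x = 0) ↔
      ∀ v ∈ G, (∀ i, P i → 0 ≤ v i) → v = 0 := by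
  classical
  constructor
  · intro h v hv hvP
    have hv' := h _ (Submodule.subset_span ⟨v, hv, rfl⟩) fun i hi => by simpa using hvP i hi
    ext i
    simpa using congrFun hv' i
  intro hG x hx hxP
  by_contra hx₀
  obtain ⟨i₀, hi₀⟩ := Function.ne_iff.1 hx₀
  have hxH := mem_realSpan_inf_iInf_ker_eval (Finset.univ.filter (x · = 0)) hx (by simp)
  have hU : IsOpen {y : ι → ℝ | ∀ i, x i ≠ 0 → 0 < x i * y i} := by
    simp only [Set.ofPred_forall]
    exact isOpen_iInter_of_finite fun i => isOpen_iInter_of_finite fun _ =>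
      isOpen_lt continuous_const (continuous_const.mul (continuous_apply i))
  obtain ⟨y, hyU, N, hN, v, hvH, hNy⟩ :=
    mem_closure_iff.1 (mem_closure_of_mem_span_addSubgroup hxH) _ hU fun i hi => mul_self_pos.2 hi
  have hvy : ∀ i, (v i : ℝ) = N * y i := fun i => by
    simpa [nsmul_eq_mul] using congrFun hNy i
  obtain ⟨hvG, hv₀⟩ := AddSubgroup.mem_inf.1 hvH
  simp only [AddSubgroup.mem_iInf, AddMonoidHom.mem_ker, Pi.evalAddMonoidHom_apply,
    Finset.mem_filter, Finset.mem_univ, true_and] at hv₀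
  have hN₀ : (0 : ℝ) < N := by exact_mod_cast Nat.pos_of_ne_zero hN
  have hv : v = 0 := hG v hvG fun i hi => by
    by_cases hxi : x i = 0
    · exact (hv₀ i hxi).ge
    · have := pos_of_mul_pos_right (hyU i hxi) (hxP i hi)
      exact_mod_cast (hvy i).symm ▸ (mul_pos hN₀ this).le
  have := hvy i₀
  rw [hv, Pi.zero_apply, Int.cast_zero, zero_eq_mul] at this
  exact (hyU i₀ hi₀).ne' (by simp [this.resolve_left hN₀.ne'])

end IntegerLattice

def kkerAddSubgroup {p t n : ℕ} (L : Matrix (Fin p ⊕ Fin t) (Fin n) ℤ) (d : Fin t → ℤ) :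
    AddSubgroup (Fin n → ℤ) where
  carrier := Kker L d
  zero_mem' := ⟨fun j => by simp, fun j => by simp⟩
  add_mem' ha hb := ⟨fun j => by simp [mulVec_add, ha.1 j, hb.1 j],
    fun j => by simpa [mulVec_add] using dvd_add (ha.2 j) (hb.2 j)⟩
  neg_mem' ha := ⟨fun j => by simp [mulVec_neg, ha.1 j],
    fun j => by simpa [mulVec_neg] using (ha.2 j).neg_right⟩

def nnConeAddSubmonoid (r n : ℕ) : AddSubmonoid (Fin n → ℤ) where
  carrier := NNcone r n
  zero_mem' _ _ := le_rfl
  add_mem' ha hb i hi := add_nonneg (ha i hi) (hb i hi)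

theorem stmt5_general {r p t : ℕ} (n : ℕ)
    (L : Matrix (Fin p ⊕ Fin t) (Fin n) ℤ) (d : Fin t → ℤ) :
    ((Kker L d ∩ NNcone r n = {0}) ↔ (Kker L d ∩ NNcone r n).Finite) ∧
    ((Kker L d ∩ NNcone r n).Finite ↔
      ∀ x : Fin n → ℝ,
        x ∈ Submodule.span ℝ ((fun lam : Fin n → ℤ => fun i => (lam i : ℝ)) '' Kker L d) →
        (∀ i : Fin n, (i : ℕ) < r → 0 ≤ x i) → x = 0) := by
  set S := (kkerAddSubgroup L d).toAddSubmonoid ⊓ nnConeAddSubmonoid r n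
  have eq_zero_iff_finite : Kker L d ∩ NNcone r n = {0} ↔ (Kker L d ∩ NNcone r n).Finite :=
    ⟨fun h => h ▸ Set.finite_singleton 0, fun h => congrArg SetLike.coe (S.eq_bot_of_finite h)⟩
  have eq_zero_iff_pointed : Kker L d ∩ NNcone r n = {0} ↔
      ∀ v ∈ kkerAddSubgroup L d, (∀ i : Fin n, (i : ℕ) < r → 0 ≤ v i) → v = 0 := by
    rw [Set.eq_singleton_iff_unique_mem]
    exact ⟨fun h v hv hvr => h.2 v ⟨hv, hvr⟩, fun h => ⟨S.zero_mem, fun v hv => h v hv.1 hv.2⟩⟩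
  -- The span in the statement is `realSpan (kkerAddSubgroup L d)` by definition.
  exact ⟨eq_zero_iff_finite, eq_zero_iff_finite.symm.trans
    (eq_zero_iff_pointed.trans (forall_mem_realSpan_nonneg_eq_zero_iff _ _).symm)⟩

/-- the following are equivalent:
(1) `𝔎 ∩ (ℕ^r × ℤ^s) = {0}` (`S₀ = k`);
(2) `𝔎 ∩ (ℕ^r × ℤ^s)` is finite (`S₀` is finite dimensional);
(3) the real span of `𝔎` meets the cone `ℝ_{≥0}^r × ℝ^s` only in `0`. -/
theorem stmt5 {r s p t : ℕ} (n : ℕ) (hn : n = r + s)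
    (L : Matrix (Fin p ⊕ Fin t) (Fin n) ℤ) (d : Fin t → ℤ) (hd : ∀ j, 0 < d j) :
    ((Kker L d ∩ NNcone r n = {0}) ↔ (Kker L d ∩ NNcone r n).Finite) ∧
    ((Kker L d ∩ NNcone r n).Finite ↔
      ∀ x : Fin n → ℝ,
        x ∈ Submodule.span ℝ ((fun lam : Fin n → ℤ => fun i => (lam i : ℝ)) '' Kker L d) →
        (∀ i : Fin n, (i : ℕ) < r → 0 ≤ x i) → x = 0) :=
  stmt5_general n L d
end

section
/- Suppose r ≥ 1 and the grading is positive, i.e., 𝔎 ∩ (ℕ^r × ℤ^s) = {0}. Then p > s. Equivalently: if r ≥ 1 and p ≤ s, then there exists a nonzero λ ∈ ℕ^r × ℤ^s with λ ∈ 𝔎. -/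
open Matrix

/-! If `p ≤ s`, look for `λ = (c, …, c, w) ∈ ℤ^r × ℤ^s`. Since `r ≥ 1`, such vectors form a copy
of `ℤ^(1+s)`, and the `p < 1 + s` conditions `(Lλ)_j = 0`, `j ≤ p`, have a nonzero
solution on it. Changing the sign makes `c ≥ 0`, and multiplying by `∏ d_j` makes the torsion
conditions `d_j ∣ (Lλ)_(p+j)` hold, which gives a nonzero element of `𝔎 ∩ (ℕ^r × ℤ^s)`. -/

lemma LinearMap.exists_ne_zero_map_eq_zero_of_finrank_lt {R M N : Type*} [Ring R]
    [StrongRankCondition R] [AddCommGroup M] [Module R M] [AddCommGroup N] [Module R N]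
    [Module.Finite R N] (f : M →ₗ[R] N) (h : Module.finrank R N < Module.finrank R M) :
    ∃ x ≠ 0, f x = 0 := by
  by_contra! hf
  have hinj : Function.Injective f :=
    (injective_iff_map_eq_zero f).2 fun x hx => by_contra fun hx0 => hf x hx0 hx
  exact (f.finrank_le_finrank_of_injective hinj).not_gt h

lemma exists_ne_zero_mem_NNcone_mulVec_eq_zero {r s p : ℕ} (hr : 0 < r) (hps : p ≤ s)
    (A : Matrix (Fin p) (Fin (r + s)) ℤ) : ∃ v ≠ 0, v ∈ NNcone r (r + s) ∧ A *ᵥ v = 0 := by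
  let collapse : Fin (r + s) → Option (Fin s) := Fin.addCases (fun _ => none) some
  have hsurj : Function.Surjective collapse := by
    rintro (_ | j)
    · exact ⟨Fin.castAdd s ⟨0, hr⟩, Fin.addCases_left _⟩
    · exact ⟨Fin.natAdd r j, Fin.addCases_right _⟩
  have hconst : ∀ (x : Option (Fin s) → ℤ) (i : Fin (r + s)), (i : ℕ) < r →
      x (collapse i) = x none := by
    intro x i hi
    simp [collapse, Fin.addCases, hi]
  obtain ⟨x, hx0, hAx⟩ := (A.mulVecLin ∘ₗ LinearMap.funLeft ℤ ℤ collapse)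
    |>.exists_ne_zero_map_eq_zero_of_finrank_lt (by simpa using Nat.lt_succ_of_le hps)
  have hAv : A *ᵥ (x ∘ collapse) = 0 := hAx
  have hv0 : x ∘ collapse ≠ 0 := by
    have := (LinearMap.funLeft_injective_of_surjective ℤ ℤ _ hsurj).ne hx0
    rwa [map_zero] at this
  rcases le_total 0 (x none) with hx | hx
  · exact ⟨x ∘ collapse, hv0, fun i hi => hx.trans (hconst x i hi).ge, hAv⟩
  · refine ⟨-(x ∘ collapse), neg_ne_zero.2 hv0, fun i hi => ?_, ?_⟩
    · simpa [hconst x i hi] using hx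
    · simp [mulVec_neg, hAv]

lemma prod_smul_mem_Kker {p t n : ℕ} (L : Matrix (Fin p ⊕ Fin t) (Fin n) ℤ) (d : Fin t → ℤ)
    {v : Fin n → ℤ} (hv : ∀ j, (L *ᵥ v) (Sum.inl j) = 0) : (∏ j, d j) • v ∈ Kker L d := by
  refine ⟨fun j => ?_, fun j => ?_⟩
  · rw [mulVec_smul, Pi.smul_apply, hv j, smul_zero]
  · rw [mulVec_smul, Pi.smul_apply, smul_eq_mul]
    exact (Finset.dvd_prod_of_mem d (Finset.mem_univ j)).mul_right _

lemma smul_mem_NNcone {r n : ℕ} {c : ℤ} (hc : 0 ≤ c) {v : Fin n → ℤ} (hv : v ∈ NNcone r n) :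
    c • v ∈ NNcone r n :=
  fun i hi => mul_nonneg hc (hv i hi)

/-- if `r ≥ 1` and the grading is positive
(`𝔎 ∩ (ℕ^r × ℤ^s) = {0}`), then `p > s`. -/
theorem stmt6 {r s p t : ℕ} (n : ℕ) (hn : n = r + s) (hr : 1 ≤ r)
    (L : Matrix (Fin p ⊕ Fin t) (Fin n) ℤ) (d : Fin t → ℤ) (hd : ∀ j, 0 < d j)
    (hpos : Kker L d ∩ NNcone r n = {0}) :
    s < p := by
  subst hn
  by_contra! hps
  obtain ⟨v, hv0, hv, hAv⟩ :=
    exists_ne_zero_mem_NNcone_mulVec_eq_zero hr hps (L.submatrix Sum.inl id)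
  have hD : 0 < ∏ j, d j := Finset.prod_pos fun j _ => hd j
  have hmem : (∏ j, d j) • v ∈ Kker L d ∩ NNcone r (r + s) :=
    ⟨prod_smul_mem_Kker L d fun j => congrFun hAv j, smul_mem_NNcone hD.le hv⟩
  rw [hpos, Set.mem_singleton_iff, smul_eq_zero] at hmem
  exact hmem.elim hD.ne' hv0
end

section
/- Suppose n = p + l with l ≤ r and that L has the special form: the submatrix of L consisting of rows 1 through p and columns l+1 through n equals d·I_p for some nonzero integer d. Let L_1 be the submatrix of L consisting of rows 1 through p and columns 1 through l, and for 1 ≤ i ≤ l let ρ_i denote the i-th column of L_1. If the grading is positive, i.e., 𝔎 ∩ (ℕ^r × ℤ^s) = {0}, then ρ_i ≠ 0 for all i = 1, …, l. -/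
open Matrix

theorem single_mem_Kker {p t n : ℕ} {L : Matrix (Fin p ⊕ Fin t) (Fin n) ℤ} {d : Fin t → ℤ}
    {i : Fin n} (hcol : ∀ j : Fin p, L (Sum.inl j) i = 0) {c : ℤ} (hc : ∀ j, d j ∣ c) :
    Pi.single i c ∈ Kker L d :=
  ⟨fun j => by simp [mulVec_single, hcol j],
    fun j => by simpa [mulVec_single] using (hc j).mul_left _⟩

theorem single_mem_NNcone {r n : ℕ} (i : Fin n) {c : ℤ} (hc : 0 ≤ c) :
    Pi.single i c ∈ NNcone r n := by
  intro k _
  rcases eq_or_ne k i with rfl | hne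
  · simpa using hc
  · simp [Pi.single_eq_of_ne hne]

/-- If the free part of `deg e_i` vanished, `(∏ d_j) • e_i` would be a nonzero element of
`𝔎 ∩ (ℕ^r × ℤ^s)`. -/
theorem exists_ne_zero_of_Kker_inter_NNcone_eq_zero {r p t n : ℕ}
    {L : Matrix (Fin p ⊕ Fin t) (Fin n) ℤ} {d : Fin t → ℤ} (hd : ∀ j, 0 < d j)
    (hpos : Kker L d ∩ NNcone r n = {0}) (i : Fin n) :
    ∃ j : Fin p, L (Sum.inl j) i ≠ 0 := by
  by_contra! hcol
  have hprod : 0 < ∏ j, d j := Finset.prod_pos fun j _ => hd j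
  have hmem : Pi.single i (∏ j, d j) ∈ Kker L d ∩ NNcone r n :=
    ⟨single_mem_Kker hcol fun j => Finset.dvd_prod_of_mem d (Finset.mem_univ j),
      single_mem_NNcone i hprod.le⟩
  rw [hpos, Set.mem_singleton_iff, Pi.single_eq_zero_iff] at hmem
  exact hprod.ne' hmem

theorem stmt8_general {r p t l : ℕ} (n : ℕ)
    (L : Matrix (Fin p ⊕ Fin t) (Fin n) ℤ) (dd : Fin t → ℤ) (hdd : ∀ j, 0 < dd j)
    (hpos : Kker L dd ∩ NNcone r n = {0}) :
    ∀ i : Fin n, (i : ℕ) < l → ∃ j : Fin p, L (Sum.inl j) i ≠ 0 :=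
  fun i _ => exists_ne_zero_of_Kker_inter_NNcone_eq_zero hdd hpos i

/-- suppose `n = p + l` with `l ≤ r` and `L` has the special form: the
submatrix of rows `1..p` and columns `l+1..n` is `d·I_p` (`d ≠ 0`). Let `ρ_i`, `1 ≤ i ≤ l`
be the columns of `L₁` (rows `1..p`, columns `1..l`). If the grading is positive, i.e.
`𝔎 ∩ (ℕ^r × ℤ^s) = {0}`, then `ρ_i ≠ 0` for all `i = 1, …, l`. -/
theorem stmt8 {r s p t l : ℕ} (n : ℕ) (hn : n = r + s) (hnl : n = p + l) (hlr : l ≤ r)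
    (L : Matrix (Fin p ⊕ Fin t) (Fin n) ℤ) (dd : Fin t → ℤ) (hdd : ∀ j, 0 < dd j)
    (d : ℤ) (hd : d ≠ 0)
    (hspecial : ∀ (j : Fin p) (i : Fin n), l ≤ (i : ℕ) →
      L (Sum.inl j) i = if (i : ℕ) = l + (j : ℕ) then d else 0)
    (hpos : Kker L dd ∩ NNcone r n = {0}) :
    ∀ i : Fin n, (i : ℕ) < l → ∃ j : Fin p, L (Sum.inl j) i ≠ 0 :=
  stmt8_general n L dd hdd hpos
end

section
/- Suppose n = p + l and the m×n integer matrix L has the special form in which the submatrix formed by rows 1 through p and columns l+1 through n equals d·I_p for some nonzero integer d. Let K be an n×l integer matrix of rank l such that the product of the first p rows of L with K is the zero p×l matrix. Then the first l rows v_1, …, v_l of K are linearly independent over ℚ (hence form a basis of ℝ^l). -/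
/-!
Each row `L_j` (`j < p`) of `L` meets the block `d·I_p` exactly once, so the relation
`L_j K = 0` reads `d·v_{l+j} = -∑_{i ≤ l} L_{ji} v_i`: as `d ≠ 0`, every row of `K` is a
rational combination of `v_1, …, v_l`. Hence a vector killed by the top `l × l` block of `K`
is killed by all of `K`, so it vanishes because `K` has rank `l`. The top block is then
invertible, and its rows are independent.
-/

open Matrix Submodule

namespace Matrix

variable {R F ι κ ν : Type*}

theorem mulVec_eq_zero_of_submatrix_mulVec_eq_zero [CommSemiring R] [Fintype κ]
    {K : Matrix ι κ R} {e : ν → ι} (hK : ∀ i, K i ∈ span R (Set.range fun k => K (e k)))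
    {g : κ → R} (hg : K.submatrix e id *ᵥ g = 0) (i : ι) : (K *ᵥ g) i = 0 := by
  refine span_induction (p := fun v _ => v ⬝ᵥ g = 0) ?_ (zero_dotProduct g) ?_ ?_ (hK i)
  · rintro _ ⟨k, rfl⟩
    exact congrFun hg k
  · intro v w _ _ hv hw
    rw [add_dotProduct, hv, hw, add_zero]
  · intro a v _ hv
    rw [smul_dotProduct, hv, smul_zero]

theorem linearIndependent_rows_submatrix_of_mem_span [Field F] [Fintype κ] [DecidableEq κ]
    {K : Matrix ι κ F} (hcols : LinearIndependent F K.col) (e : κ → ι)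
    (hK : ∀ i, K i ∈ span F (Set.range fun k => K (e k))) :
    LinearIndependent F (K.submatrix e id).row := by
  rw [linearIndependent_rows_iff_isUnit, ← mulVec_injective_iff_isUnit]
  refine (injective_iff_map_eq_zero (K.submatrix e id).mulVecLin).2 fun g hg => ?_
  refine mulVec_injective_iff.2 hcols ?_
  rw [mulVec_zero]
  exact funext (mulVec_eq_zero_of_submatrix_mulVec_eq_zero hK hg)

end Matrix

theorem row_mem_span_castLE {F κ : Type*} [Field F] {m n p l : ℕ}
    (hn : n = p + l) (hpm : p ≤ m) {L : Matrix (Fin m) (Fin n) F} {d : F} (hd : d ≠ 0)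
    (hspecial : ∀ j : Fin m, (j : ℕ) < p → ∀ i : Fin n, l ≤ (i : ℕ) →
      L j i = if (i : ℕ) = l + (j : ℕ) then d else 0)
    {K : Matrix (Fin n) κ F} (hLK : ∀ j : Fin m, (j : ℕ) < p → L j ᵥ* K = 0) (i : Fin n) :
    K i ∈ span F (Set.range fun k : Fin l => K (Fin.castLE (hn ▸ Nat.le_add_left l p) k)) := by
  by_cases hil : (i : ℕ) < l
  · exact subset_span ⟨⟨i, hil⟩, rfl⟩
  set j : Fin m := ⟨i - l, by omega⟩
  have hj : (j : ℕ) < p := by simp only [j]; omega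
  have hLji : L j i = d := by rw [hspecial j hj i (by omega), if_pos (by simp only [j]; omega)]
  have hrel : L j i • K i + ∑ i' ∈ Finset.univ.erase i, L j i' • K i' = 0 := by
    rw [Finset.add_sum_erase _ (fun i' => L j i' • K i') (Finset.mem_univ i), ← vecMul_eq_sum,
      hLK j hj]
  rw [← smul_mem_iff _ hd, ← hLji, eq_neg_of_add_eq_zero_left hrel]
  refine neg_mem (sum_mem fun i' hi' => ?_)
  by_cases hi'l : (i' : ℕ) < l
  · exact smul_mem _ _ (subset_span ⟨⟨i', hi'l⟩, rfl⟩)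
  · have hne : (i' : ℕ) ≠ l + j := fun h =>
      Finset.ne_of_mem_erase hi' (Fin.ext (by simp only [j] at h; omega))
    rw [hspecial j hj i' (by omega), if_neg hne, zero_smul]
    exact zero_mem _

/-- suppose `n = p + l` and the `m × n` integer matrix `L` has the special
form in which the submatrix of rows `1..p` and columns `l+1..n` equals `d·I_p` with
`d ≠ 0`. Let `K` be an `n × l` integer matrix of rank `l` (columns linearly independent
over `ℚ`) such that the product of the first `p` rows of `L` with `K` is zero. Then the
first `l` rows `v_1, …, v_l` of `K` are linearly independent over `ℚ`. -/
theorem stmt9 {m n p l : ℕ} (hn : n = p + l) (hpm : p ≤ m)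
    (L : Matrix (Fin m) (Fin n) ℤ) (d : ℤ) (hd : d ≠ 0)
    (hspecial : ∀ j : Fin m, (j : ℕ) < p → ∀ i : Fin n, l ≤ (i : ℕ) →
      L j i = if (i : ℕ) = l + (j : ℕ) then d else 0)
    (K : Matrix (Fin n) (Fin l) ℤ)
    (hK : LinearIndependent ℚ (fun c : Fin l => fun i : Fin n => (K i c : ℚ)))
    (hLK : ∀ j : Fin m, (j : ℕ) < p → ∀ c : Fin l, ∑ i : Fin n, L j i * K i c = 0) :
    LinearIndependent ℚ
      (fun i : Fin l => fun c : Fin l => (K (Fin.castLE (by omega) i) c : ℚ)) := by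
  have hspecialℚ : ∀ j : Fin m, (j : ℕ) < p → ∀ i : Fin n, l ≤ (i : ℕ) →
      L.map (Int.cast : ℤ → ℚ) j i = if (i : ℕ) = l + (j : ℕ) then (d : ℚ) else 0 :=
    fun j hj i hi => by simp only [map_apply, hspecial j hj i hi, Int.cast_ite, Int.cast_zero]
  have hLKℚ : ∀ j : Fin m, (j : ℕ) < p →
      L.map (Int.cast : ℤ → ℚ) j ᵥ* K.map Int.cast = 0 :=
    fun j hj => funext fun c => by
      simp only [vecMul, dotProduct, map_apply, Pi.zero_apply]
      exact_mod_cast hLK j hj c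
  have hrows := row_mem_span_castLE hn hpm (Int.cast_ne_zero.2 hd) hspecialℚ hLKℚ
  exact linearIndependent_rows_submatrix_of_mem_span (K := K.map Int.cast) hK _ hrows
end

section
/- The following statements are equivalent: (1) there exists φ ∈ ℕ^r × ℤ^s such that the set (φ + 𝔎) ∩ (ℕ^r × ℤ^s) is finite (equivalently, some nonzero graded component S_a, a in the degree semigroup, is finite-dimensional over k); (2) for every φ ∈ ℕ^r × ℤ^s the set (φ + 𝔎) ∩ (ℕ^r × ℤ^s) is finite (equivalently, every graded component S_a is finite-dimensional); (3) the real linear span of 𝔎 in ℝ^n intersects the cone ℝ_{≥0}^r × ℝ^s = {x ∈ ℝ^n : x_i ≥ 0 for 1 ≤ i ≤ r} only in 0 (equivalently, any fan compatible with the multigrading is not contained in a half-space). -/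
/-! The three conditions all reduce to `𝔎 ∩ (ℕ^r × ℤ^s) = 0`. A nonzero `ν` in this intersection
gives the infinitely many points `φ + kν` of every fibre. Without one, two points of a fibre that
are comparable coordinatewise on their first `r` entries differ by an element of the intersection,
so a fibre is an antichain and is finite by Dickson's lemma.

For the real span, write a nonzero `x` of the real cone as `∑ tⱼ λⱼ` with `λⱼ ∈ 𝔎` and apply
coordinatewise a `ℚ`-linear `f : ℝ → ℚ` that is close to the identity on the coordinates of `x`:
`(f xᵢ)ᵢ = ∑ f(tⱼ) λⱼ` lies in the rational span of `𝔎`, vanishes where `x` does and is positive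
where `x` is, so clearing denominators gives a nonzero point of `𝔎` in the cone. -/

open Matrix

def Kker.addSubgroup {p t n : ℕ} (L : Matrix (Fin p ⊕ Fin t) (Fin n) ℤ) (d : Fin t → ℤ) :
    AddSubgroup (Fin n → ℤ) where
  carrier := Kker L d
  zero_mem' := ⟨fun j => by simp, fun j => by simp⟩
  add_mem' := fun ⟨ha, ha'⟩ ⟨hb, hb'⟩ =>
    ⟨fun j => by simp [mulVec_add, ha j, hb j],
      fun j => by simpa [mulVec_add] using dvd_add (ha' j) (hb' j)⟩
  neg_mem' := fun ⟨ha, ha'⟩ =>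
    ⟨fun j => by simp [mulVec_neg, ha j], fun j => by simpa [mulVec_neg] using ha' j⟩

section

variable {ι : Type*} {I : Set ι} {K : AddSubgroup (ι → ℤ)}

lemma exists_ratLinearMap_comp_mem_of_isOpen [Finite ι] {x : ι → ℝ} {U : Set (ι → ℝ)}
    (hU : IsOpen U) (hxU : x ∈ U) : ∃ f : ℝ →ₗ[ℚ] ℚ, (fun i => (f (x i) : ℝ)) ∈ U := by
  let V := Submodule.span ℚ (Set.range x)
  have : FiniteDimensional ℚ V := FiniteDimensional.span_of_finite ℚ (Set.finite_range x)
  have hxV (i : ι) : x i ∈ V := Submodule.subset_span (Set.mem_range_self i)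
  let e := Module.finBasis ℚ V
  let c (i : ι) := e.equivFun ⟨x i, hxV i⟩
  let Ψ : (Fin (Module.finrank ℚ V) → ℝ) → ι → ℝ := fun s i => ∑ k, (c i k : ℝ) * s k
  -- For rational `s`, `Ψ s` is `(f xᵢ)ᵢ` where `f` sends the basis vector `eₖ` to `sₖ`.
  have hΨ : Continuous Ψ := by fun_prop
  have hΨe : Ψ (fun k => (e k : ℝ)) = x := by
    funext i
    calc Ψ (fun k => (e k : ℝ)) i = ((∑ k, c i k • e k : V) : ℝ) := by simp [Ψ, Rat.smul_def]
      _ = x i := congrArg Subtype.val (e.sum_equivFun _)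
  obtain ⟨s, hs⟩ := (DenseRange.piMap fun _ => Rat.denseRange_cast (𝕜 := ℝ)).exists_mem_open
    (hU.preimage hΨ) ⟨_, by rwa [Set.mem_preimage, hΨe]⟩
  obtain ⟨f, hf⟩ := LinearMap.exists_extend (e.constr ℚ s)
  refine ⟨f, ?_⟩
  rw [Set.mem_preimage] at hs
  convert hs using 1
  funext i
  have := LinearMap.congr_fun hf ⟨x i, hxV i⟩
  simp only [LinearMap.comp_apply, Submodule.subtype_apply,
    Module.Basis.constr_apply_fintype] at this
  simp [this, Ψ, c]

lemma ratLinearMap_comp_mem_span {S : Set (ι → ℤ)} {x : ι → ℝ}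
    (hx : x ∈ Submodule.span ℝ ((fun lam : ι → ℤ => fun i => (lam i : ℝ)) '' S))
    (g : ℝ →ₗ[ℚ] ℚ) :
    (fun i => g (x i)) ∈ Submodule.span ℚ ((fun lam : ι → ℤ => fun i => (lam i : ℚ)) '' S) := by
  induction hx using Submodule.span_induction generalizing g with
  | mem x hx =>
    obtain ⟨lam, hlam, rfl⟩ := hx
    have : (fun i => g (lam i : ℝ)) = g 1 • fun i => (lam i : ℚ) := by
      funext i
      rw [← zsmul_one, map_zsmul]
      simp [mul_comm]
    exact this ▸ Submodule.smul_mem _ _ (Submodule.subset_span ⟨lam, hlam, rfl⟩)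
  | zero =>
    simp only [Pi.zero_apply, map_zero]
    exact Submodule.zero_mem _
  | add x y _ _ hx hy => simpa [Pi.add_def] using Submodule.add_mem _ (hx g) (hy g)
  | smul c x _ hx =>
    -- `g (c * xᵢ) = (g ∘ (c * ·)) xᵢ`: this is why the induction runs over all `g`.
    simpa using hx (g.comp (LinearMap.mulLeft ℚ c))

lemma exists_pos_smul_mem_of_mem_span_rat {y : ι → ℚ}
    (hy : y ∈ Submodule.span ℚ ((fun lam : ι → ℤ => fun i => (lam i : ℚ)) '' K)) :
    ∃ N : ℕ, 0 < N ∧ ∃ μ ∈ K, (fun i => (μ i : ℚ)) = (N : ℚ) • y := by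
  induction hy using Submodule.span_induction with
  | mem y hy =>
    obtain ⟨μ, hμ, rfl⟩ := hy
    exact ⟨1, one_pos, μ, hμ, by simp⟩
  | zero => exact ⟨1, one_pos, 0, K.zero_mem, by ext; simp⟩
  | add y z _ _ hy hz =>
    obtain ⟨N, hN, μ, hμ, hμy⟩ := hy
    obtain ⟨M, hM, ν, hν, hνz⟩ := hz
    refine ⟨N * M, Nat.mul_pos hN hM, (M : ℤ) • μ + (N : ℤ) • ν,
      K.add_mem (K.zsmul_mem hμ M) (K.zsmul_mem hν N), ?_⟩
    funext i
    have hy := congrFun hμy i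
    have hz := congrFun hνz i
    simp only [Pi.add_apply, Pi.smul_apply, smul_eq_mul] at hy hz ⊢
    push_cast
    rw [hy, hz]
    ring
  | smul a y _ hy =>
    obtain ⟨N, hN, μ, hμ, hμy⟩ := hy
    refine ⟨N * a.den, Nat.mul_pos hN a.den_pos, a.num • μ, K.zsmul_mem hμ a.num, ?_⟩
    funext i
    have hy := congrFun hμy i
    simp only [Pi.smul_apply, smul_eq_mul] at hy ⊢
    push_cast [hy]
    rw [← Rat.mul_den_eq_num a]
    ring

lemma cone_inter_eq_zero_of_finite_fiber {φ : ι → ℤ} (hφ : ∀ i ∈ I, 0 ≤ φ i)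
    (hfin : {lam : ι → ℤ | (∀ i ∈ I, 0 ≤ lam i) ∧ lam - φ ∈ K}.Finite) :
    ∀ ν ∈ K, (∀ i ∈ I, 0 ≤ ν i) → ν = 0 := by
  intro ν hνK hνI
  by_contra hν
  refine Set.not_infinite.mpr hfin
    (Set.infinite_of_injective_forall_mem (f := fun k : ℕ => φ + (k : ℤ) • ν)
      ((add_right_injective φ).comp ((smul_left_injective ℤ hν).comp Nat.cast_injective))
      fun k => ⟨?_, ?_⟩)
  · intro i hi
    simpa using add_nonneg (hφ i hi) (mul_nonneg k.cast_nonneg (hνI i hi))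
  · simpa using K.zsmul_mem hνK k

lemma finite_fiber_of_cone_inter_eq_zero [Finite ι]
    (hK : ∀ ν ∈ K, (∀ i ∈ I, 0 ≤ ν i) → ν = 0) (φ : ι → ℤ) :
    {lam : ι → ℤ | (∀ i ∈ I, 0 ≤ lam i) ∧ lam - φ ∈ K}.Finite := by
  set S := {lam : ι → ℤ | (∀ i ∈ I, 0 ≤ lam i) ∧ lam - φ ∈ K}
  let g : (ι → ℤ) → (ι → ℕ) := fun lam i => (lam i).toNat
  have eq_of_le : ∀ a ∈ S, ∀ b ∈ S, g a ≤ g b → a = b := by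
    intro a ha b hb hab
    refine (sub_eq_zero.mp (hK _ (by simpa using K.sub_mem hb.2 ha.2) fun i hi => ?_)).symm
    have : (a i).toNat ≤ (b i).toNat := hab i
    have := hb.1 i hi
    simp only [Pi.sub_apply, sub_nonneg]
    omega
  have hinj : Set.InjOn g S := fun a ha b hb hab => eq_of_le a ha b hb hab.le
  refine Set.Finite.of_finite_image (WellQuasiOrderedLE.finite_of_isAntichain ?_) hinj
  rintro _ ⟨a, ha, rfl⟩ _ ⟨b, hb, rfl⟩ hne hab
  exact hne (congrArg g (eq_of_le a ha b hb hab))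

lemma cone_inter_eq_zero_iff_real_span [Finite ι] :
    (∀ ν ∈ K, (∀ i ∈ I, 0 ≤ ν i) → ν = 0) ↔
      ∀ x ∈ Submodule.span ℝ ((fun lam : ι → ℤ => fun i => (lam i : ℝ)) '' K),
        (∀ i ∈ I, 0 ≤ x i) → x = 0 := by
  refine ⟨fun hK x hx hxI => ?_, fun h ν hν hνI => ?_⟩
  · by_contra hx0
    obtain ⟨j, hj⟩ := Function.ne_iff.mp hx0
    let U : Set (ι → ℝ) := {y | y j ≠ 0} ∩ ⋂ i ∈ {i | 0 < x i}, {y | 0 < y i}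
    have hU : IsOpen U := (isOpen_ne_fun (continuous_apply j) continuous_const).inter
      ((Set.toFinite _).isOpen_biInter fun i _ => isOpen_lt continuous_const (continuous_apply i))
    obtain ⟨f, hfj, hfpos⟩ := exists_ratLinearMap_comp_mem_of_isOpen hU ⟨hj, by simp⟩
    simp only [Set.mem_iInter, Set.mem_ofPred_eq, Rat.cast_pos] at hfj hfpos
    obtain ⟨N, hN, μ, hμK, hμ⟩ :=
      exists_pos_smul_mem_of_mem_span_rat (ratLinearMap_comp_mem_span hx f)
    have hμi (i : ι) : (μ i : ℚ) = N * f (x i) := congrFun hμ i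
    have hμ0 : μ = 0 := hK μ hμK fun i hi => by
      rcases (hxI i hi).eq_or_lt with hxi | hxi
      · have : (μ i : ℚ) = 0 := by rw [hμi, ← hxi, map_zero, mul_zero]
        exact_mod_cast this.ge
      · have : (0 : ℚ) ≤ μ i := by rw [hμi]; exact mul_nonneg N.cast_nonneg (hfpos i hxi).le
        exact_mod_cast this
    have hNfj : (N : ℚ) * f (x j) = 0 := by rw [← hμi, hμ0, Pi.zero_apply, Int.cast_zero]
    exact hfj (by exact_mod_cast (mul_eq_zero.mp hNfj).resolve_left (by positivity))
  · have := h (fun i => (ν i : ℝ)) (Submodule.subset_span ⟨ν, hν, rfl⟩) fun i hi => by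
      exact_mod_cast hνI i hi
    funext i
    simpa using congrFun this i

end

theorem stmt11_general {r p t : ℕ} (n : ℕ)
    (L : Matrix (Fin p ⊕ Fin t) (Fin n) ℤ) (d : Fin t → ℤ) :
    ((∃ φ ∈ NNcone r n,
        {lam : Fin n → ℤ | lam ∈ NNcone r n ∧ lam - φ ∈ Kker L d}.Finite) ↔
      (∀ φ ∈ NNcone r n,
        {lam : Fin n → ℤ | lam ∈ NNcone r n ∧ lam - φ ∈ Kker L d}.Finite)) ∧
    ((∀ φ ∈ NNcone r n,
        {lam : Fin n → ℤ | lam ∈ NNcone r n ∧ lam - φ ∈ Kker L d}.Finite) ↔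
      ∀ x : Fin n → ℝ,
        x ∈ Submodule.span ℝ ((fun lam : Fin n → ℤ => fun i => (lam i : ℝ)) '' Kker L d) →
        (∀ i : Fin n, (i : ℕ) < r → 0 ≤ x i) → x = 0) := by
  let K := Kker.addSubgroup L d
  have h0 : (0 : Fin n → ℤ) ∈ NNcone r n := fun _ _ => le_rfl
  have hreal := cone_inter_eq_zero_iff_real_span (I := {i : Fin n | (i : ℕ) < r}) (K := K)
  have hpointed {φ} (hφ : φ ∈ NNcone r n)
      (hfin : {lam | lam ∈ NNcone r n ∧ lam - φ ∈ Kker L d}.Finite) :=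
    cone_inter_eq_zero_of_finite_fiber (K := K) hφ hfin
  exact ⟨⟨fun ⟨φ, hφ, hfin⟩ ψ _ => finite_fiber_of_cone_inter_eq_zero (hpointed hφ hfin) ψ,
      fun h => ⟨0, h0, h 0 h0⟩⟩,
    ⟨fun h => hreal.mp (hpointed h0 (h 0 h0)),
      fun h φ _ => finite_fiber_of_cone_inter_eq_zero (hreal.mpr h) φ⟩⟩

/-- the following are equivalent:
(1) some graded component is finite dimensional: there is `φ ∈ ℕ^r × ℤ^s` with
    `(φ + 𝔎) ∩ (ℕ^r × ℤ^s)` finite;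
(2) every graded component is finite dimensional: for every `φ ∈ ℕ^r × ℤ^s` the set
    `(φ + 𝔎) ∩ (ℕ^r × ℤ^s)` is finite;
(3) the real span of `𝔎` meets the cone `ℝ_{≥0}^r × ℝ^s` only in `0`. -/
theorem stmt11 {r s p t : ℕ} (n : ℕ) (hn : n = r + s)
    (L : Matrix (Fin p ⊕ Fin t) (Fin n) ℤ) (d : Fin t → ℤ) (hd : ∀ j, 0 < d j) :
    ((∃ φ ∈ NNcone r n,
        {lam : Fin n → ℤ | lam ∈ NNcone r n ∧ lam - φ ∈ Kker L d}.Finite) ↔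
      (∀ φ ∈ NNcone r n,
        {lam : Fin n → ℤ | lam ∈ NNcone r n ∧ lam - φ ∈ Kker L d}.Finite)) ∧
    ((∀ φ ∈ NNcone r n,
        {lam : Fin n → ℤ | lam ∈ NNcone r n ∧ lam - φ ∈ Kker L d}.Finite) ↔
      ∀ x : Fin n → ℝ,
        x ∈ Submodule.span ℝ ((fun lam : Fin n → ℤ => fun i => (lam i : ℝ)) '' Kker L d) →
        (∀ i : Fin n, (i : ℕ) < r → 0 ≤ x i) → x = 0) :=
  stmt11_general n L d
end

section
/- Suppose the grading is positive, i.e., 𝔎 ∩ (ℕ^r × ℤ^s) = {0}. Let K be an n×l integer matrix whose columns form a ℤ-basis of 𝔎, with rows v_1, …, v_n ∈ ℤ^l. Then for every φ ∈ ℕ^r × ℤ^s, the set {λ ∈ ℕ^r × ℤ^s : λ − φ ∈ 𝔎} is finite and its cardinality equals the (finite) number of lattice points of the polytope P_φ = {u ∈ ℝ^l : ⟨u, v_i⟩ ≥ −φ_i for i = 1, …, r}; equivalently, the dimension of the graded component S_a over k, for a = deg(φ), equals #(P_φ ∩ ℤ^l). -/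
open Matrix

theorem Set.finite_of_le_imp_eq {α β : Type*} [Preorder α] [WellQuasiOrderedLE α]
    {T : Set β} (g : β → α) (h : ∀ x ∈ T, ∀ y ∈ T, g x ≤ g y → x = y) : T.Finite := by
  have hanti : IsAntichain (· ≤ ·) (g '' T) := by
    rintro _ ⟨x, hx, rfl⟩ _ ⟨y, hy, rfl⟩ hne hle
    exact hne (congrArg g (h x hx y hy hle))
  refine (WellQuasiOrderedLE.finite_of_isAntichain hanti).of_finite_image ?_
  exact fun x hx y hy hxy => h x hx y hy hxy.le

theorem finite_setOf_le_apply_of_pointed {G ι : Type*} [AddCommGroup G] [Finite ι]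
    (f : G →+ ι → ℤ) (S : ι → Prop) (hf : ∀ w, (∀ i, S i → 0 ≤ f w i) → w = 0)
    (b : ι → ℤ) : {u | ∀ i, S i → b i ≤ f u i}.Finite := by
  refine Set.finite_of_le_imp_eq (fun u (i : {i // S i}) => (f u i - b i).toNat) ?_
  intro u hu v hv huv
  have hvu : ∀ i, S i → 0 ≤ f (v - u) i := by
    intro i hi
    have hle : (f u i - b i).toNat ≤ (f v i - b i).toNat := huv ⟨i, hi⟩
    have hbu := hu i hi
    have hbv := hv i hi
    rw [map_sub, Pi.sub_apply]
    omega
  exact (sub_eq_zero.mp (hf _ hvu)).symm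

theorem setOf_mem_NNcone_sub_mem_Kker_eq_image {r p t n l : ℕ}
    (L : Matrix (Fin p ⊕ Fin t) (Fin n) ℤ) (d : Fin t → ℤ) (K : Matrix (Fin n) (Fin l) ℤ)
    (hKspan : ∀ lam : Fin n → ℤ, lam ∈ Kker L d ↔ ∃ u : Fin l → ℤ, lam = K.mulVec u)
    (φ : Fin n → ℤ) :
    {lam : Fin n → ℤ | lam ∈ NNcone r n ∧ lam - φ ∈ Kker L d} =
      (φ + K.mulVec ·) '' {u | ∀ i : Fin n, (i : ℕ) < r → -(φ i) ≤ K.mulVec u i} := by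
  ext lam
  constructor
  · rintro ⟨hlam, hker⟩
    obtain ⟨u, hu⟩ := (hKspan _).mp hker
    refine ⟨u, fun i hi => ?_, ?_⟩
    · have := congrFun hu i
      simp only [Pi.sub_apply] at this
      linarith [hlam i hi]
    · change φ + K *ᵥ u = lam
      rw [← hu, add_sub_cancel]
  · rintro ⟨u, hu, rfl⟩
    refine ⟨fun i hi => ?_, (hKspan _).mpr ⟨u, add_sub_cancel_left _ _⟩⟩
    simp only [Pi.add_apply]
    linarith [hu i hi]

theorem stmt12_general {r p t l : ℕ} (n : ℕ)
    (L : Matrix (Fin p ⊕ Fin t) (Fin n) ℤ) (d : Fin t → ℤ)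
    (hpos : Kker L d ∩ NNcone r n = {0})
    (K : Matrix (Fin n) (Fin l) ℤ)
    (hKli : LinearIndependent ℤ (fun c : Fin l => fun i : Fin n => K i c))
    (hKspan : ∀ lam : Fin n → ℤ, lam ∈ Kker L d ↔ ∃ u : Fin l → ℤ, lam = K.mulVec u) :
    ∀ φ ∈ NNcone r n,
      {lam : Fin n → ℤ | lam ∈ NNcone r n ∧ lam - φ ∈ Kker L d}.Finite ∧
      {u : Fin l → ℤ | ∀ i : Fin n, (i : ℕ) < r → -(φ i) ≤ K.mulVec u i}.Finite ∧
      {lam : Fin n → ℤ | lam ∈ NNcone r n ∧ lam - φ ∈ Kker L d}.ncard =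
        {u : Fin l → ℤ | ∀ i : Fin n, (i : ℕ) < r → -(φ i) ≤ K.mulVec u i}.ncard := by
  intro φ _
  have hKinj : Function.Injective K.mulVec := Matrix.mulVec_injective_iff.mpr hKli
  have hpointed : ∀ w : Fin l → ℤ, (∀ i : Fin n, (i : ℕ) < r → 0 ≤ K.mulVec w i) → w = 0 := by
    intro w hw
    have hmem : K.mulVec w ∈ Kker L d ∩ NNcone r n := ⟨(hKspan _).mpr ⟨w, rfl⟩, hw⟩
    rw [hpos] at hmem
    exact hKinj (hmem.trans (mulVec_zero K).symm)
  have hfin := finite_setOf_le_apply_of_pointed K.mulVecLin.toAddMonoidHom _ hpointed (-φ)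
  rw [setOf_mem_NNcone_sub_mem_Kker_eq_image L d K hKspan φ]
  exact ⟨hfin.image _, hfin,
    Set.ncard_image_of_injective _ ((add_right_injective φ).comp hKinj)⟩

/-- suppose the grading is positive (`𝔎 ∩ (ℕ^r × ℤ^s) = {0}`) and let `K`
be an `n × l` integer matrix whose columns form a `ℤ`-basis of `𝔎`, with rows
`v_1, …, v_n`. Then for every `φ ∈ ℕ^r × ℤ^s` the set `{λ ∈ ℕ^r × ℤ^s | λ - φ ∈ 𝔎}`
(indexing a `k`-basis of `S_a`, `a = deg φ`) is finite, the set of lattice points of the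
polytope `P_φ = {u | ⟨u, v_i⟩ ≥ -φ_i, i = 1..r}` is finite, and their cardinalities
coincide: `dim_k S_a = #(P_φ ∩ ℤ^l)`. -/
theorem stmt12 {r s p t l : ℕ} (n : ℕ) (hn : n = r + s)
    (L : Matrix (Fin p ⊕ Fin t) (Fin n) ℤ) (d : Fin t → ℤ) (hd : ∀ j, 0 < d j)
    (hpos : Kker L d ∩ NNcone r n = {0})
    (K : Matrix (Fin n) (Fin l) ℤ)
    (hKli : LinearIndependent ℤ (fun c : Fin l => fun i : Fin n => K i c))
    (hKspan : ∀ lam : Fin n → ℤ, lam ∈ Kker L d ↔ ∃ u : Fin l → ℤ, lam = K.mulVec u) :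
    ∀ φ ∈ NNcone r n,
      {lam : Fin n → ℤ | lam ∈ NNcone r n ∧ lam - φ ∈ Kker L d}.Finite ∧
      {u : Fin l → ℤ | ∀ i : Fin n, (i : ℕ) < r → -(φ i) ≤ K.mulVec u i}.Finite ∧
      {lam : Fin n → ℤ | lam ∈ NNcone r n ∧ lam - φ ∈ Kker L d}.ncard =
        {u : Fin l → ℤ | ∀ i : Fin n, (i : ℕ) < r → -(φ i) ≤ K.mulVec u i}.ncard :=
  stmt12_general n L d hpos K hKli hKspan
end

section
/- Let K be an n×l integer matrix whose columns form a ℤ-basis of 𝔎, with rows v_1, …, v_n ∈ ℤ^l, and let C^∨ = {u ∈ ℝ^l : ⟨u, v_i⟩ ≥ 0 for all i = 1, …, r} be the dual cone of the cone generated by v_1, …, v_r. Suppose w_1, …, w_h ∈ C^∨ ∩ ℤ^l form a Hilbert basis of C^∨, i.e., every lattice point of C^∨ is a nonnegative-integer combination of w_1, …, w_h. Then the monoid 𝔎 ∩ (ℕ^r × ℤ^s) equals {n_1·(Kw_1) + … + n_h·(Kw_h) : n_1, …, n_h ∈ ℕ}, i.e., it is generated as a monoid by Kw_1, …, Kw_h.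 (Equivalently, S_0 = k[x^{ω(w_1)}, …, x^{ω(w_h)}].) -/
/-! `ω : u ↦ K u` is an isomorphism `ℤ^l ≃ 𝔎` under which the sign conditions defining
`ℕ^r × ℤ^s` become the inequalities `⟨u, v_i⟩ ≥ 0` defining `C^∨`; so it maps the monoid
`C^∨ ∩ ℤ^l`, generated by its Hilbert basis, onto `𝔎 ∩ (ℕ^r × ℤ^s)`. -/

open Matrix

theorem Matrix.mulVec_sum_nsmul {ι m n R : Type*} [Fintype ι] [Fintype n]
    [NonUnitalNonAssocSemiring R] (K : Matrix m n R) (c : ι → ℕ) (w : ι → n → R) :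
    K *ᵥ ∑ k, c k • w k = ∑ k, c k • K *ᵥ w k := by
  simp only [mulVec_sum, mulVec_smul]

theorem sum_nsmul_mem_NNcone {ι : Type*} [Fintype ι] {r n : ℕ} (c : ι → ℕ)
    (v : ι → Fin n → ℤ) (hv : ∀ k, v k ∈ NNcone r n) : ∑ k, c k • v k ∈ NNcone r n := by
  intro i hi
  rw [Finset.sum_apply]
  exact Finset.sum_nonneg fun k _ => nsmul_nonneg (hv k i hi) _

theorem stmt13_general {r p t l h : ℕ} (n : ℕ)
    (L : Matrix (Fin p ⊕ Fin t) (Fin n) ℤ) (d : Fin t → ℤ)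
    (K : Matrix (Fin n) (Fin l) ℤ)
    (hKspan : ∀ lam : Fin n → ℤ, lam ∈ Kker L d ↔ ∃ u : Fin l → ℤ, lam = K.mulVec u)
    (w : Fin h → Fin l → ℤ)
    (hw : ∀ k : Fin h, ∀ i : Fin n, (i : ℕ) < r → 0 ≤ K.mulVec (w k) i)
    (hHilbert : ∀ u : Fin l → ℤ, (∀ i : Fin n, (i : ℕ) < r → 0 ≤ K.mulVec u i) →
      ∃ c : Fin h → ℕ, u = ∑ k : Fin h, c k • w k) :
    Kker L d ∩ NNcone r n =
      {lam : Fin n → ℤ | ∃ c : Fin h → ℕ, lam = ∑ k : Fin h, c k • K.mulVec (w k)} := by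
  ext lam
  constructor
  · rintro ⟨hker, hnn⟩
    obtain ⟨u, rfl⟩ := (hKspan lam).1 hker
    obtain ⟨c, rfl⟩ := hHilbert u hnn
    exact ⟨c, K.mulVec_sum_nsmul c w⟩
  · rintro ⟨c, rfl⟩
    exact ⟨(hKspan _).2 ⟨_, (K.mulVec_sum_nsmul c w).symm⟩, sum_nsmul_mem_NNcone c _ hw⟩

/-- let `K` be an `n × l` matrix whose columns are a `ℤ`-basis of `𝔎`, with
rows `v_1, …, v_n`, and let `C^∨ = {u | ⟨u, v_i⟩ ≥ 0, i = 1..r}`.  If `w_1, …, w_h` is a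
Hilbert basis of `C^∨` (every lattice point of `C^∨` is an `ℕ`-combination of the `w_k`),
then the monoid `𝔎 ∩ (ℕ^r × ℤ^s)` is generated by `Kw_1, …, Kw_h`:
`𝔎 ∩ (ℕ^r × ℤ^s) = {∑ n_k·(Kw_k) | n_k ∈ ℕ}` (i.e. `S₀ = k[x^{ω(w_1)},…,x^{ω(w_h)}]`). -/
theorem stmt13 {r s p t l h : ℕ} (n : ℕ) (hn : n = r + s)
    (L : Matrix (Fin p ⊕ Fin t) (Fin n) ℤ) (d : Fin t → ℤ) (hd : ∀ j, 0 < d j)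
    (K : Matrix (Fin n) (Fin l) ℤ)
    (hKli : LinearIndependent ℤ (fun c : Fin l => fun i : Fin n => K i c))
    (hKspan : ∀ lam : Fin n → ℤ, lam ∈ Kker L d ↔ ∃ u : Fin l → ℤ, lam = K.mulVec u)
    (w : Fin h → Fin l → ℤ)
    (hw : ∀ k : Fin h, ∀ i : Fin n, (i : ℕ) < r → 0 ≤ K.mulVec (w k) i)
    (hHilbert : ∀ u : Fin l → ℤ, (∀ i : Fin n, (i : ℕ) < r → 0 ≤ K.mulVec u i) →
      ∃ c : Fin h → ℕ, u = ∑ k : Fin h, c k • w k) :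
    Kker L d ∩ NNcone r n =
      {lam : Fin n → ℤ | ∃ c : Fin h → ℕ, lam = ∑ k : Fin h, c k • K.mulVec (w k)} :=
  stmt13_general n L d K hKspan w hw hHilbert
end

section
/- Let w_1, …, w_h ∈ ℤ^l, let C = {α_1 w_1 + … + α_h w_h : α_i ∈ ℝ, α_i ≥ 0} be the convex cone they generate, and let B = {α_1 w_1 + … + α_h w_h : 0 ≤ α_i ≤ 1}. Let P ⊆ ℝ^l be a polytope and set Q = P + C (Minkowski sum). Then the lattice points of Q decompose as Q ∩ ℤ^l = ((P + B) ∩ ℤ^l) + (C ∩ ℤ^l), i.e., every lattice point of Q is the sum of a lattice point of the bounded set P + B and a lattice point of C, and conversely every such sum is a lattice point of Q. -/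
/-!
Writing each coefficient `α_k = ⌊α_k⌋ + fract α_k` splits a point of `C` into a point of `B` and an
integral point of `C`, which is a lattice point. Subtracting it from a lattice point of `P + C`
leaves a lattice point of `P + B`; conversely `B + C ⊆ C`, so `P + B + C ⊆ P + C`.
-/

open Pointwise

/-- The cone `C = ℝ_{≥0} w_1 + … + ℝ_{≥0} w_h ⊆ ℝ^l` generated by `w_1, …, w_h ∈ ℤ^l`. -/
def coneGen {l h : ℕ} (w : Fin h → Fin l → ℤ) : Set (Fin l → ℝ) :=
  {x | ∃ α : Fin h → ℝ, (∀ k, 0 ≤ α k) ∧ x = ∑ k : Fin h, α k • fun j => (w k j : ℝ)}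

/-- The "box" `B = {∑ α_k w_k | 0 ≤ α_k ≤ 1}`. -/
def boxGen {l h : ℕ} (w : Fin h → Fin l → ℤ) : Set (Fin l → ℝ) :=
  {x | ∃ α : Fin h → ℝ, (∀ k, 0 ≤ α k ∧ α k ≤ 1) ∧
    x = ∑ k : Fin h, α k • fun j => (w k j : ℝ)}

/-- The lattice `ℤ^l ⊆ ℝ^l`. -/
def intLattice (l : ℕ) : Set (Fin l → ℝ) :=
  {x | ∀ i : Fin l, ∃ m : ℤ, x i = (m : ℝ)}

section

variable {l h : ℕ}

lemma add_mem_intLattice {x y : Fin l → ℝ} (hx : x ∈ intLattice l) (hy : y ∈ intLattice l) :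
    x + y ∈ intLattice l := fun i => by
  obtain ⟨m, hm⟩ := hx i
  obtain ⟨n, hn⟩ := hy i
  exact ⟨m + n, by simp [hm, hn]⟩

lemma sub_mem_intLattice {x y : Fin l → ℝ} (hx : x ∈ intLattice l) (hy : y ∈ intLattice l) :
    x - y ∈ intLattice l := fun i => by
  obtain ⟨m, hm⟩ := hx i
  obtain ⟨n, hn⟩ := hy i
  exact ⟨m - n, by simp [hm, hn]⟩

variable (w : Fin h → Fin l → ℤ)

lemma sum_intCast_smul_mem_intLattice (a : Fin h → ℤ) :
    ∑ k, (a k : ℝ) • (fun j => (w k j : ℝ)) ∈ intLattice l := fun i =>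
  ⟨∑ k, a k * w k i, by simp⟩

lemma boxGen_add_coneGen_subset : boxGen w + coneGen w ⊆ coneGen w := by
  rintro _ ⟨_, ⟨β, hβ, rfl⟩, _, ⟨γ, hγ, rfl⟩, rfl⟩
  exact ⟨β + γ, fun k => add_nonneg (hβ k).1 (hγ k), by
    simp [add_smul, Finset.sum_add_distrib]⟩

lemma coneGen_subset_boxGen_add : coneGen w ⊆ boxGen w + (coneGen w ∩ intLattice l) := by
  rintro _ ⟨α, hα, rfl⟩
  refine ⟨_, ⟨fun k => Int.fract (α k), fun k => ⟨Int.fract_nonneg _, (Int.fract_lt_one _).le⟩,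
      rfl⟩, _, ⟨⟨fun k => (⌊α k⌋ : ℝ), fun k => Int.cast_nonneg (Int.floor_nonneg.mpr (hα k)),
      rfl⟩, sum_intCast_smul_mem_intLattice w _⟩, ?_⟩
  simp only [← Finset.sum_add_distrib, ← add_smul, Int.fract_add_floor]

end

theorem stmt14_general {l h : ℕ} (w : Fin h → Fin l → ℤ)
    (P : Set (Fin l → ℝ)) :
    (P + coneGen w) ∩ intLattice l =
      ((P + boxGen w) ∩ intLattice l) + (coneGen w ∩ intLattice l) := by
  ext x
  constructor
  · rintro ⟨⟨p, hp, c, hc, rfl⟩, hx⟩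
    obtain ⟨b, hb, z, hz, rfl⟩ := coneGen_subset_boxGen_add w hc
    have hpb : p + b ∈ intLattice l := by
      simpa only [← add_assoc, add_sub_cancel_right] using sub_mem_intLattice hx hz.2
    exact ⟨p + b, ⟨Set.add_mem_add hp hb, hpb⟩, z, hz, add_assoc p b z⟩
  · rintro ⟨y, ⟨hy, hyL⟩, z, ⟨hzC, hzL⟩, rfl⟩
    have hsub : P + boxGen w + coneGen w ⊆ P + coneGen w := by
      rw [add_assoc]
      exact Set.add_subset_add_left (boxGen_add_coneGen_subset w)
    exact ⟨hsub (Set.add_mem_add hy hzC), add_mem_intLattice hyL hzL⟩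

/-- let `w_1, …, w_h ∈ ℤ^l`, let `C` be the convex cone they generate and
`B = {∑ α_k w_k | 0 ≤ α_k ≤ 1}`. Let `P ⊆ ℝ^l` be a polytope (convex hull of a finite
set) and `Q = P + C` the Minkowski sum. Then
`Q ∩ ℤ^l = ((P + B) ∩ ℤ^l) + (C ∩ ℤ^l)`. -/
theorem stmt14 {l h : ℕ} (hl : 1 ≤ l) (w : Fin h → Fin l → ℤ)
    (P : Set (Fin l → ℝ)) (F : Finset (Fin l → ℝ))
    (hP : P = convexHull ℝ (F : Set (Fin l → ℝ))) :
    (P + coneGen w) ∩ intLattice l =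
      ((P + boxGen w) ∩ intLattice l) + (coneGen w ∩ intLattice l) :=
  stmt14_general w P
end

section
/- For every φ ∈ ℕ^r × ℤ^s, the set Σ_φ = {λ ∈ ℕ^r × ℤ^s : λ − φ ∈ 𝔎} is finitely generated as a module over the monoid Σ_0 = 𝔎 ∩ (ℕ^r × ℤ^s): there exists a finite subset F ⊆ Σ_φ such that Σ_φ = {f + σ : f ∈ F, σ ∈ Σ_0}. (Equivalently, every graded component S_a of S, a in the degree semigroup, is finitely generated as an S_0-module.) -/
open Matrix

/-! The free coordinates of `ℕ^r × ℤ^s` play no role: if `f, λ ∈ ℕ^r × ℤ^s` have the same degree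
and `f ≤ λ` on the first `r` coordinates, then `λ = f + (λ - f)` with `λ - f ∈ Σ_0`. By Dickson's
lemma the truncations `Int.toNat ∘ λ ∈ ℕ^n` of the elements of `Σ_φ` have finitely many minimal
elements, and representatives of these form `F`. -/

theorem exists_finset_forall_exists_le_of_wellQuasiOrderedLE {β α : Type*} [PartialOrder α]
    [WellQuasiOrderedLE α] (τ : β → α) (S : Set β) :
    ∃ F : Finset β, ↑F ⊆ S ∧ ∀ x ∈ S, ∃ f ∈ F, τ f ≤ τ x := by
  have hpwo := Set.isPWO_of_wellQuasiOrderedLE (τ '' S)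
  have hmin : {y | Minimal (· ∈ τ '' S) y}.Finite :=
    (setOfPred_minimal_antichain _).finite_of_partiallyWellOrderedOn
      (hpwo.mono (setOfPred_minimal_subset _))
  obtain ⟨G, hGS, hG, hτG⟩ : ∃ G ⊆ S, G.Finite ∧ {y | Minimal (· ∈ τ '' S) y} = τ '' G :=
    Set.exists_subset_image_finite_and.1
      ⟨_, setOfPred_minimal_subset _, hmin, rfl⟩
  refine ⟨hG.toFinset, by simpa using hGS, fun x hx => ?_⟩
  obtain ⟨y, hyx, hy⟩ := hpwo.exists_le_minimal (Set.mem_image_of_mem τ hx)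
  obtain ⟨f, hf, rfl⟩ : y ∈ τ '' G := hτG ▸ hy
  exact ⟨f, hG.mem_toFinset.2 hf, hyx⟩

theorem add_mem_NNcone {r n : ℕ} {a b : Fin n → ℤ} (ha : a ∈ NNcone r n) (hb : b ∈ NNcone r n) :
    a + b ∈ NNcone r n := fun i hi => add_nonneg (ha i hi) (hb i hi)

theorem sub_mem_NNcone_of_toNat_le {r n : ℕ} {f lam : Fin n → ℤ} (hf : f ∈ NNcone r n)
    (hlam : lam ∈ NNcone r n) (hle : Int.toNat ∘ f ≤ Int.toNat ∘ lam) :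
    lam - f ∈ NNcone r n := by
  intro i hi
  have h := hle i
  have := hf i hi
  have := hlam i hi
  simp only [Function.comp_apply, Pi.sub_apply] at h ⊢
  omega

theorem exists_finset_coset_inter_NNcone_eq_add {r n : ℕ} (K : AddSubgroup (Fin n → ℤ))
    (φ : Fin n → ℤ) :
    ∃ F : Finset (Fin n → ℤ),
      (↑F ⊆ {lam : Fin n → ℤ | lam ∈ NNcone r n ∧ lam - φ ∈ K}) ∧
      {lam : Fin n → ℤ | lam ∈ NNcone r n ∧ lam - φ ∈ K} =
        {lam : Fin n → ℤ | ∃ f ∈ F, ∃ σ ∈ (K : Set (Fin n → ℤ)) ∩ NNcone r n, lam = f + σ} := by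
  obtain ⟨F, hFS, hF⟩ := exists_finset_forall_exists_le_of_wellQuasiOrderedLE
    (fun lam : Fin n → ℤ => Int.toNat ∘ lam) {lam | lam ∈ NNcone r n ∧ lam - φ ∈ K}
  refine ⟨F, hFS, Set.Subset.antisymm ?_ ?_⟩
  · rintro lam hlam
    obtain ⟨f, hf, hle⟩ := hF lam hlam
    obtain ⟨hfC, hfK⟩ := hFS hf
    refine ⟨f, hf, lam - f, ⟨?_, sub_mem_NNcone_of_toNat_le hfC hlam.1 hle⟩, by abel⟩
    simpa using K.sub_mem hlam.2 hfK
  · rintro _ ⟨f, hf, σ, ⟨hσK, hσC⟩, rfl⟩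
    obtain ⟨hfC, hfK⟩ := hFS hf
    refine ⟨add_mem_NNcone hfC hσC, ?_⟩
    simpa [add_sub_right_comm] using K.add_mem hfK hσK

theorem stmt15_general {r p t : ℕ} (n : ℕ)
    (L : Matrix (Fin p ⊕ Fin t) (Fin n) ℤ) (d : Fin t → ℤ) :
    ∀ φ ∈ NNcone r n, ∃ F : Finset (Fin n → ℤ),
      (↑F ⊆ {lam : Fin n → ℤ | lam ∈ NNcone r n ∧ lam - φ ∈ Kker L d}) ∧
      {lam : Fin n → ℤ | lam ∈ NNcone r n ∧ lam - φ ∈ Kker L d} =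
        {lam : Fin n → ℤ | ∃ f ∈ F, ∃ σ ∈ Kker L d ∩ NNcone r n, lam = f + σ} :=
  fun φ _ => exists_finset_coset_inter_NNcone_eq_add (kkerAddSubgroup L d) φ

/-- for every `φ ∈ ℕ^r × ℤ^s`, the set
`Σ_φ = {λ ∈ ℕ^r × ℤ^s | λ - φ ∈ 𝔎}` is finitely generated as a module over the monoid
`Σ_0 = 𝔎 ∩ (ℕ^r × ℤ^s)`: there is a finite `F ⊆ Σ_φ` with `Σ_φ = F + Σ_0`
(equivalently, every graded component `S_a` is a finitely generated `S_0`-module). -/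
theorem stmt15 {r s p t : ℕ} (n : ℕ) (hn : n = r + s)
    (L : Matrix (Fin p ⊕ Fin t) (Fin n) ℤ) (d : Fin t → ℤ) (hd : ∀ j, 0 < d j) :
    ∀ φ ∈ NNcone r n, ∃ F : Finset (Fin n → ℤ),
      (↑F ⊆ {lam : Fin n → ℤ | lam ∈ NNcone r n ∧ lam - φ ∈ Kker L d}) ∧
      {lam : Fin n → ℤ | lam ∈ NNcone r n ∧ lam - φ ∈ Kker L d} =
        {lam : Fin n → ℤ | ∃ f ∈ F, ∃ σ ∈ Kker L d ∩ NNcone r n, lam = f + σ} :=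
  stmt15_general n L d
end
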